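/- (Clique-tree conversion preserves the SDP.) Let G = (V,E) be a chordal undirected simple graph on V = {1,…,n} with C_1,…,C_N the set of all cliques of G, and assume every pair (h,k) ∈ Ē satisfies h, k ∈ C_i for some i. Let C, A_1,…,A_m ∈ S^n(E), b ∈ R^m, and let C_i ∈ S^{|C_i|} and A_{k,i} ∈ S^{|C_i|} satisfy ⟨C, Q⟩ = Σ_{i=1}^N ⟨C_i, Q_{C_i}⟩ and ⟨A_k, Q⟩ = Σ_{i=1}^N ⟨A_{k,i}, Q_{C_i}⟩ for all Q ∈ S^n(E) and all k ∈ {1,…,m}. Then the achieved objective values of the original SDP and of its decomposition coincide: {⟨C, X⟩ : X ∈ S^n_{⪰0}, ⟨A_k, X⟩ = b_k ∀k} = {Σ_{i=1}^N ⟨C_i, X_i⟩ : X_i ∈ S^{|C_i|}_{⪰0} ∀i, Σ_{i=1}^N ⟨A_{k,i}, X_i⟩ = b_k ∀k, and P_{C_i∩C_j}(P_{C_i}ᵀ X_i P_{C_i} − P_{C_j}ᵀ X_j P_{C_j})P_{C_i∩C_j}ᵀ = 0 ∀i,j}. In particular the two problems have the same optimal value. -/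

import Mathlib

open Matrix

/-- `X` has the sparsity pattern of the graph `G`: every off-diagonal entry
indexed by a non-edge vanishes. -/
def HasSparsity {n : ℕ} (G : SimpleGraph (Fin n)) (X : Matrix (Fin n) (Fin n) ℝ) : Prop :=
  ∀ i j : Fin n, i ≠ j → ¬ G.Adj i j → X i j = 0

/-- The `|C| × n` entry-selection matrix `P_C`: `[P_C]_{h,k} = 1` iff `k` is the
`h`-th smallest element of `C`. -/
def selMat {n : ℕ} (C : Finset (Fin n)) : Matrix (Fin C.card) (Fin n) ℝ :=
  Matrix.of fun h k => if ((C.orderIsoOfFin rfl h : C) : Fin n) = k then 1 else 0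

/-- A clique of `G`: a maximal complete set of vertices. -/
def IsMaxClique {n : ℕ} (G : SimpleGraph (Fin n)) (s : Finset (Fin n)) : Prop :=
  G.IsClique (↑s : Set (Fin n)) ∧
    ∀ t : Finset (Fin n), G.IsClique (↑t : Set (Fin n)) → s ⊆ t → s = t

/-- `G` is chordal: every cycle of length greater than three has a chord, i.e. an
edge of `G` joining two vertices of the cycle that is not an edge of the cycle
(equivalently, joining two nonconsecutive vertices of the cycle). -/
def IsChordal {n : ℕ} (G : SimpleGraph (Fin n)) : Prop :=
  ∀ (v : Fin n) (c : G.Walk v v), c.IsCycle → 3 < c.length →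
    ∃ u w : Fin n, u ∈ c.support ∧ w ∈ c.support ∧ G.Adj u w ∧ s(u, w) ∉ c.edges

/-!
Restricting a feasible `X ⪰ 0` to the cliques gives consistent PSD blocks with the same objective
and constraint values, because `C` and the `A_k` only see the entries of `X` on `Ē`, and every pair
in `Ē` lies in a clique. Conversely, consistent PSD clique blocks specify a partial matrix on `Ē`
whose principal submatrix on every clique is PSD, and for a chordal pattern such a partial matrix
has a PSD completion (Grone, Johnson, Sá, Wolkowicz). The completion is built one vertex at a time,
removing a simplicial vertex, which exists by Dirac's theorem (minimal separators of a chordal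
graph are cliques). Adding back a vertex `v` whose neighbourhood is a clique `N` amounts to
bordering a PSD matrix by one row and column: since the block on `{v} ∪ N` is PSD, its column `v`
lies in the range of the block on `N`, and this gives the missing entries.
-/

namespace SimpleGraph

variable {V : Type*} {G : SimpleGraph V}

def Chordal (G : SimpleGraph V) : Prop :=
  ∀ (v : V) (c : G.Walk v v), c.IsCycle → 3 < c.length → ¬ c.IsChordless

def IsSimplicial (G : SimpleGraph V) (v : V) : Prop :=
  G.IsClique (G.neighborSet v)

theorem IsClique.eq_or_adj {s : Set V} (hs : G.IsClique s) {u w : V} (hu : u ∈ s) (hw : w ∈ s) :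
    u = w ∨ G.Adj u w :=
  or_iff_not_imp_left.2 (hs hu hw)

theorem Chordal.comap {W : Type*} {H : SimpleGraph W} (hG : G.Chordal) (f : H ↪g G) :
    H.Chordal := by
  intro v c hc hl hcl
  refine hG _ (c.map f.toHom) ((Walk.isCycle_map_iff_of_injective f.injective).2 hc)
    (by rwa [Walk.length_map]) (Walk.isChordless_iff_forall_mem_edges.2 ?_)
  intro u w hu hw hadj
  rw [Walk.support_map, List.mem_map] at hu hw
  obtain ⟨u, hu, rfl⟩ := hu
  obtain ⟨w, hw, rfl⟩ := hw
  rw [Walk.edges_map]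
  exact List.mem_map_of_mem (hcl.mem_edges hu hw (f.map_adj_iff.1 hadj))

namespace Walk

variable {x y u w : V}

theorem IsPath.start_notMem_support_tail {p : G.Walk x y} (hp : p.IsPath) :
    x ∉ p.support.tail := by
  have := hp.support_nodup
  rw [← p.cons_tail_support, List.nodup_cons] at this
  exact this.1

theorem two_le_length_of_not_adj (p : G.Walk x y) (hxy : x ≠ y) (hadj : ¬ G.Adj x y) :
    2 ≤ p.length := by
  rcases p with _ | ⟨h, _ | _⟩
  exacts [absurd rfl hxy, absurd h hadj, by simp]

theorem exists_length_lt_of_isChord {p : G.Walk x y} (hp : p.IsChord s(u, w)) :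
    ∃ q : G.Walk x y, q.length < p.length ∧ q.support ⊆ p.support := by
  obtain ⟨hadj, hnot, hu, hw⟩ := isChord_sym2Mk.1 hp
  obtain ⟨i, rfl, hi⟩ := mem_support_iff_exists_getVert.1 hu
  obtain ⟨j, rfl, hj⟩ := mem_support_iff_exists_getVert.1 hw
  clear hp hu hw
  wlog hij : i < j generalizing i j
  · have hji : j < i := (Nat.lt_or_gt_of_ne fun h => hadj.ne (by rw [h])).resolve_left hij
    exact this j hj i hi hadj.symm (by rwa [Sym2.eq_swap]) hji
  have hji : i + 1 ≠ j := by
    rintro rfl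
    exact hnot ((mk_mem_edges_iff_exists p).2 ⟨i, by omega, rfl⟩)
  refine ⟨(p.take i).append (cons hadj (p.drop j)), ?_, ?_⟩
  · simp only [length_append, length_cons, take_length, drop_length]
    omega
  · intro z hz
    rw [mem_support_append_iff, support_cons, List.mem_cons, support_take,
      drop_support_eq_support_drop_min] at hz
    rcases hz with hz | rfl | hz
    exacts [List.mem_of_mem_take hz, getVert_mem_support p i, List.mem_of_mem_drop hz]

theorem exists_isPath_isChordless_of_support_subset {T : Set V} {p : G.Walk x y}
    (hp : ∀ z ∈ p.support, z ∈ T) :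
    ∃ q : G.Walk x y, q.IsPath ∧ q.IsChordless ∧ ∀ z ∈ q.support, z ∈ T := by
  classical
  obtain ⟨q, hqT, hmin⟩ := (measure (Walk.length : G.Walk x y → ℕ)).wf.has_min
    {q | ∀ z ∈ q.support, z ∈ T} ⟨p, hp⟩
  refine ⟨q.bypass, q.bypass_isPath, ?_, fun z hz => hqT z (q.support_bypass_subset_support hz)⟩
  rw [IsChordless, Sym2.forall]
  intro u w hc
  obtain ⟨r, hr, hrq⟩ := exists_length_lt_of_isChord hc
  exact hmin r (fun z hz => hqT z (q.support_bypass_subset_support (hrq hz)))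
    (hr.trans_le q.length_bypass_le_length)

theorem IsChordless.append {z : V} {p : G.Walk x y} {q : G.Walk y z} (hp : p.IsChordless)
    (hq : q.IsChordless)
    (hpq : ∀ u ∈ p.support, ∀ w ∈ q.support, G.Adj u w → u ∈ q.support ∨ w ∈ p.support) :
    (p.append q).IsChordless := by
  rw [isChordless_iff_forall_mem_edges] at hp hq ⊢
  have hpq' : ∀ u w, u ∈ p.support ∨ u ∈ q.support → w ∈ p.support ∨ w ∈ q.support →
      G.Adj u w → (u ∈ p.support ∧ w ∈ p.support) ∨ (u ∈ q.support ∧ w ∈ q.support) := by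
    rintro u w (hu | hu) (hw | hw) hadj
    · exact .inl ⟨hu, hw⟩
    · rcases hpq u hu w hw hadj with h | h
      exacts [.inr ⟨h, hw⟩, .inl ⟨hu, h⟩]
    · rcases hpq w hw u hu hadj.symm with h | h
      exacts [.inr ⟨hu, h⟩, .inl ⟨h, hw⟩]
    · exact .inr ⟨hu, hw⟩
  intro u w hu hw hadj
  rw [mem_support_append_iff] at hu hw
  rw [edges_append, List.mem_append]
  rcases hpq' u w hu hw hadj with ⟨hu, hw⟩ | ⟨hu, hw⟩
  exacts [.inl (hp hu hw hadj), .inr (hq hu hw hadj)]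

end Walk

/-- `G - S`, with the vertices of `S` kept as isolated vertices so that the vertex type is
unchanged. -/
def deleteVerts (G : SimpleGraph V) (S : Set V) : SimpleGraph V where
  Adj u w := G.Adj u w ∧ u ∉ S ∧ w ∉ S
  symm := ⟨fun _ _ h => ⟨h.1.symm, h.2.2, h.2.1⟩⟩
  loopless := ⟨fun _ h => h.1.ne rfl⟩

@[simp]
theorem deleteVerts_adj {S : Set V} {u w : V} :
    (G.deleteVerts S).Adj u w ↔ G.Adj u w ∧ u ∉ S ∧ w ∉ S :=
  Iff.rfl

theorem deleteVerts_le (S : Set V) : G.deleteVerts S ≤ G := fun _ _ h => h.1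

theorem Reachable.notMem_of_deleteVerts {S : Set V} {a z : V}
    (h : (G.deleteVerts S).Reachable a z) (ha : a ∉ S) : z ∉ S := by
  obtain ⟨p⟩ := h
  induction p with
  | nil => exact ha
  | cons h _ ih => exact ih (deleteVerts_adj.1 h).2.2

def Separates (G : SimpleGraph V) (S : Set V) (a b : V) : Prop :=
  a ∉ S ∧ b ∉ S ∧ ¬ (G.deleteVerts S).Reachable a b

theorem separates_comm {S : Set V} {a b : V} : G.Separates S a b ↔ G.Separates S b a :=
  ⟨fun ⟨ha, hb, h⟩ => ⟨hb, ha, fun h' => h h'.symm⟩,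
    fun ⟨hb, ha, h⟩ => ⟨ha, hb, fun h' => h h'.symm⟩⟩

theorem Separates.ne_of_reachable {S : Set V} {a b u w : V} (h : G.Separates S a b)
    (hu : (G.deleteVerts S).Reachable a u) (hw : (G.deleteVerts S).Reachable b w) : u ≠ w := by
  rintro rfl
  exact h.2.2 (hu.trans hw.symm)

theorem Separates.not_adj_of_reachable {S : Set V} {a b u w : V} (h : G.Separates S a b)
    (hu : (G.deleteVerts S).Reachable a u) (hw : (G.deleteVerts S).Reachable b w) :
    ¬ G.Adj u w := fun huw =>
  h.2.2 (hu.trans ((deleteVerts_adj.2 ⟨huw, hu.notMem_of_deleteVerts h.1,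
    hw.notMem_of_deleteVerts h.2.1⟩).reachable.trans hw.symm))

theorem separates_compl_pair {a b : V} (hab : a ≠ b) (hadj : ¬ G.Adj a b) :
    G.Separates {a, b}ᶜ a b := by
  refine ⟨by simp, by simp, ?_⟩
  rintro ⟨p⟩
  cases p with
  | nil => exact hab rfl
  | cons h _ =>
    obtain ⟨h', -, hc⟩ := deleteVerts_adj.1 h
    simp only [Set.mem_compl_iff, Set.mem_insert_iff, Set.mem_singleton_iff, not_not] at hc
    obtain rfl | rfl := hc
    exacts [h'.ne rfl, hadj h']

theorem exists_adj_reachable_of_minimal_separates {S : Set V} {a b x : V}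
    (hS : Minimal (G.Separates · a b) S) (hx : x ∈ S) :
    ∃ u, G.Adj x u ∧ u ∉ S ∧ (G.deleteVerts S).Reachable a u := by
  obtain ⟨ha, hb, hab⟩ := hS.prop
  have hlt : S \ {x} < S := Set.sdiff_singleton_ssubset.2 hx
  obtain ⟨p⟩ : (G.deleteVerts (S \ {x})).Reachable a b := by
    by_contra h
    exact hS.not_prop_of_lt hlt ⟨fun h => ha h.1, fun h => hb h.1, h⟩
  obtain ⟨⟨⟨c, d⟩, hcd⟩, -, hc, hd⟩ :=
    p.exists_boundary_dart {z | (G.deleteVerts S).Reachable a z} Reachable.rfl hab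
  have hcS : c ∉ S := Reachable.notMem_of_deleteVerts hc ha
  rw [deleteVerts_adj] at hcd
  by_cases hdx : d = x
  · subst hdx
    exact ⟨c, hcd.1.symm, hcS, hc⟩
  · exact absurd (hc.trans (deleteVerts_adj.2 ⟨hcd.1, hcS, fun h => hcd.2.2 ⟨h, hdx⟩⟩).reachable) hd

theorem exists_isChordless_of_minimal_separates {S : Set V} {a b x y : V}
    (hS : Minimal (G.Separates · a b) S) (hx : x ∈ S) (hy : y ∈ S) :
    ∃ p : G.Walk x y, p.IsPath ∧ p.IsChordless ∧
      ∀ z ∈ p.support, z = x ∨ z = y ∨ (G.deleteVerts S).Reachable a z := by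
  obtain ⟨u, hxu, -, hu⟩ := exists_adj_reachable_of_minimal_separates hS hx
  obtain ⟨w, hyw, -, hw⟩ := exists_adj_reachable_of_minimal_separates hS hy
  obtain ⟨q⟩ := hu.symm.trans hw
  apply Walk.exists_isPath_isChordless_of_support_subset
    (p := .cons hxu ((q.mapLe (deleteVerts_le S)).append (.cons hyw.symm .nil)))
  intro z hz
  simp only [Walk.support_cons, Walk.mem_support_append_iff, Walk.support_mapLe_eq_support,
    Walk.support_nil, List.mem_cons, List.not_mem_nil, or_false] at hz
  rcases hz with rfl | hz | rfl | rfl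
  · exact .inl rfl
  · classical
    exact .inr (.inr (hu.trans ⟨q.takeUntil z hz⟩))
  · exact .inr (.inr hw)
  · exact .inr (.inl rfl)

theorem Chordal.isClique_of_minimal_separates (hG : G.Chordal) {S : Set V} {a b : V}
    (hS : Minimal (G.Separates · a b) S) : G.IsClique S := by
  intro x hx y hy hxy
  by_contra hnadj
  have hS' : Minimal (G.Separates · b a) S := by simpa only [separates_comm] using hS
  obtain ⟨p, hp, hpc, hpa⟩ := exists_isChordless_of_minimal_separates hS hx hy
  obtain ⟨q, hq, hqc, hqb⟩ := exists_isChordless_of_minimal_separates hS' hy hx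
  -- `p` runs through the side of `a` and `q` through the side of `b`, so together they form a
  -- chordless cycle of length at least four.
  have hp2 := p.two_le_length_of_not_adj hxy hnadj
  have hq2 := q.two_le_length_of_not_adj hxy.symm (hnadj ∘ Adj.symm)
  have hdisj : p.support.tail.Disjoint q.support.tail := by
    intro z hzp hzq
    have hzx : z ≠ x := by
      rintro rfl
      exact hp.start_notMem_support_tail hzp
    have hzy : z ≠ y := by
      rintro rfl
      exact hq.start_notMem_support_tail hzq
    have hza := ((hpa z (List.mem_of_mem_tail hzp)).resolve_left hzx).resolve_left hzy
    have hzb := ((hqb z (List.mem_of_mem_tail hzq)).resolve_left hzy).resolve_left hzx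
    exact hS.prop.ne_of_reachable hza hzb rfl
  refine hG x _ (hp.isCycle_append hq hdisj (.inl hp2)) (by rw [Walk.length_append]; omega)
    (hpc.append hqc fun u hu w hw huw => ?_)
  by_contra! h
  have hua := ((hpa u hu).resolve_left fun e => h.1 (e ▸ q.end_mem_support)).resolve_left
    fun e => h.1 (e ▸ q.start_mem_support)
  have hwb := ((hqb w hw).resolve_left fun e => h.2 (e ▸ p.end_mem_support)).resolve_left
    fun e => h.2 (e ▸ p.start_mem_support)
  exact hS.prop.not_adj_of_reachable hua hwb huw

theorem IsSimplicial.of_induce {T : Set V} {v : T} (hv : (G.induce T).IsSimplicial v)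
    (hT : G.neighborSet v ⊆ T) : G.IsSimplicial v :=
  fun a ha b hb hab => hv (x := ⟨a, hT ha⟩) ha (y := ⟨b, hT hb⟩) hb (by simpa using hab)

theorem Chordal.exists_isSimplicial_notMem [Finite V] (hG : G.Chordal) {K : Set V}
    (hK : G.IsClique K) (hKV : K ≠ Set.univ) : ∃ v ∉ K, G.IsSimplicial v := by
  induction hn : Nat.card V using Nat.strong_induction_on generalizing V with
  | _ n ih =>
  obtain ⟨v₀, hv₀⟩ : ∃ v, v ∉ K := by simpa [Set.eq_univ_iff_forall] using hKV
  by_cases hcomplete : ∀ a b : V, a ≠ b → G.Adj a b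
  · exact ⟨v₀, hv₀, fun a _ b _ hab => hcomplete a b hab⟩
  push Not at hcomplete
  obtain ⟨a, b, hab, hnadj⟩ := hcomplete
  obtain ⟨S, -, hS⟩ :=
    exists_minimal_le_of_wellFoundedLT (G.Separates · a b) _ (separates_compl_pair hab hnadj)
  have hSK := hG.isClique_of_minimal_separates hS
  -- A simplicial vertex of the graph induced on `S` and the side of `a`, chosen outside the clique
  -- `S`, has all its neighbours in that graph, hence is simplicial in `G`.
  have simplicial_of_side : ∀ {a b : V}, Minimal (G.Separates · a b) S →
      ∃ v, (G.deleteVerts S).Reachable a v ∧ G.IsSimplicial v := by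
    intro a b hS
    obtain ⟨ha, hb, hab⟩ := hS.prop
    let T : Set V := {z | (G.deleteVerts S).Reachable a z} ∪ S
    have hbT : b ∉ T := by rintro (h | h); exacts [hab h, hb h]
    obtain ⟨v, hvS, hv⟩ := ih _ (hn ▸ Finite.card_subtype_lt hbT)
      (hG.comap (Embedding.induce T)) (K := (↑) ⁻¹' S)
      (fun u hu w hw huw => by simpa using hSK hu hw (Subtype.val_injective.ne huw))
      (fun h => ha (h ▸ Set.mem_univ (⟨a, .inl .rfl⟩ : T) :)) rfl
    have hva : (G.deleteVerts S).Reachable a v := v.2.resolve_right hvS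
    refine ⟨v, hva, hv.of_induce fun w hw => ?_⟩
    by_cases hwS : w ∈ S
    exacts [.inr hwS, .inl (hva.trans (deleteVerts_adj.2 ⟨hw, hvS, hwS⟩).reachable)]
  obtain ⟨va, hva, hsa⟩ := simplicial_of_side hS
  obtain ⟨vb, hvb, hsb⟩ := simplicial_of_side (b := a) (by simpa only [separates_comm] using hS)
  by_cases hvaK : va ∈ K
  · refine ⟨vb, fun hvbK => ?_, hsb⟩
    exact hS.prop.not_adj_of_reachable hva hvb
      (hK hvaK hvbK (hS.prop.ne_of_reachable hva hvb))
  · exact ⟨va, hvaK, hsa⟩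

theorem Chordal.exists_mem_isClique_neighborSet_inter [Finite V] (hG : G.Chordal) {S : Set V}
    (hS : S.Nonempty) : ∃ v ∈ S, G.IsClique (G.neighborSet v ∩ S) := by
  have : Nonempty S := hS.to_subtype
  obtain ⟨v, -, hv⟩ := (hG.comap (Embedding.induce S)).exists_isSimplicial_notMem
    isClique_empty Set.empty_ne_univ
  refine ⟨v, v.2, fun a ha b hb hab => ?_⟩
  simpa using hv (x := ⟨a, ha.2⟩) ha.1 (y := ⟨b, hb.2⟩) hb.1 (by simpa using hab)

end SimpleGraph

namespace Matrix

theorem PosSemidef.mul_mul_transpose_same {V W : Type*} [Finite V] [Fintype W] {X : Matrix W W ℝ}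
    (hX : X.PosSemidef) (B : Matrix V W ℝ) : (B * X * Bᵀ).PosSemidef := by
  simpa [conjTranspose_eq_transpose_of_trivial] using hX.mul_mul_conjTranspose_same B

variable {W : Type*} [Fintype W] [DecidableEq W]

theorem IsHermitian.exists_mulVec_eq {P : Matrix W W ℝ} (hP : P.IsHermitian) {a : W → ℝ}
    (ha : ∀ x, P *ᵥ x = 0 → a ⬝ᵥ x = 0) : ∃ y, P *ᵥ y = a := by
  have hT := isSymmetric_toEuclideanLin_iff.2 hP
  have : WithLp.toLp 2 a ∈ LinearMap.range P.toEuclideanLin := by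
    rw [← Submodule.orthogonal_orthogonal (LinearMap.range _), hT.orthogonal_range,
      Submodule.mem_orthogonal]
    intro x hx
    have := ha x.ofLp (by simpa using congrArg WithLp.ofLp (LinearMap.mem_ker.1 hx))
    simpa [PiLp.inner_apply, dotProduct, mul_comm] using this
  obtain ⟨y, hy⟩ := this
  exact ⟨y.ofLp, by simpa using congrArg WithLp.ofLp hy⟩

theorem PosSemidef.exists_mulVec_eq_of_ne {M : Matrix W W ℝ} (hM : M.PosSemidef) (w₀ : W) :
    ∃ z : W → ℝ, z w₀ = 0 ∧ (∀ u ≠ w₀, (M *ᵥ z) u = M u w₀) ∧ z ⬝ᵥ M *ᵥ z ≤ M w₀ w₀ := by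
  have hMs := (isHermitian_iff_isSymm.1 hM.1).apply
  -- Solve `P z = (M u w₀)_{u ≠ w₀}` for `M` with row and column `w₀` cleared. The right-hand side is
  -- orthogonal to `ker P`, because a PSD matrix kills every vector on which its form vanishes.
  let P : Matrix W W ℝ := of fun u w => if u = w₀ ∨ w = w₀ then 0 else M u w
  have hP : P.IsHermitian := by
    ext u w
    simp only [conjTranspose_apply, star_trivial, P, of_apply, or_comm, hMs u w]
  have hmask (x : W → ℝ) (u : W) (hu : u ≠ w₀) :
      (M *ᵥ Function.update x w₀ 0) u = (P *ᵥ x) u := by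
    simp only [mulVec, dotProduct, P, of_apply, hu, false_or, Function.update_apply]
    refine Finset.sum_congr rfl fun w _ => ?_
    split_ifs <;> simp
  have horth (x : W → ℝ) (hx : P *ᵥ x = 0) :
      (fun u => if u = w₀ then 0 else M u w₀) ⬝ᵥ x = 0 := by
    have hker : M *ᵥ Function.update x w₀ 0 = 0 := by
      rw [← hM.dotProduct_mulVec_zero_iff, star_trivial]
      refine Finset.sum_eq_zero fun u _ => ?_
      by_cases hu : u = w₀
      · simp [hu]
      · simp [hmask x u hu, hx]
    have := congrFun hker w₀
    simp only [mulVec, dotProduct, Function.update_apply, Pi.zero_apply] at this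
    refine Eq.trans (Finset.sum_congr rfl fun u _ => ?_) this
    by_cases hu : u = w₀ <;> simp [hu, hMs u w₀]
  obtain ⟨y, hy⟩ := hP.exists_mulVec_eq horth
  set z := Function.update y w₀ 0
  have hz0 : z w₀ = 0 := Function.update_self ..
  have hzM (u : W) (hu : u ≠ w₀) : (M *ᵥ z) u = M u w₀ := by
    rw [hmask y u hu, hy]
    exact if_neg hu
  have hcol : z ⬝ᵥ M.col w₀ = (M *ᵥ z) w₀ := by
    simp only [dotProduct, mulVec, col_apply, hMs _ w₀, mul_comm]
  have hquad : z ⬝ᵥ M *ᵥ z = (M *ᵥ z) w₀ := by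
    rw [← hcol]
    refine Finset.sum_congr rfl fun u _ => ?_
    by_cases hu : u = w₀
    · simp [hu, hz0]
    · rw [hzM u hu, col_apply]
  have hpsd := hM.dotProduct_mulVec_nonneg (Pi.single w₀ 1 - z)
  simp only [star_trivial, mulVec_sub, dotProduct_sub, sub_dotProduct, single_one_dotProduct,
    hcol, mulVec_single_one, col_apply] at hpsd
  exact ⟨z, hz0, hzM, by linarith⟩

theorem PosSemidef.exists_posSemidef_border {X' : Matrix W W ℝ} (hX' : X'.PosSemidef) (v : W)
    (y : W → ℝ) {s : ℝ} (hs : 0 ≤ s) :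
    ∃ X : Matrix W W ℝ, X.PosSemidef ∧ (∀ i j, i ≠ v → j ≠ v → X i j = X' i j) ∧
      (∀ j ≠ v, X v j = (X' *ᵥ y) j) ∧ X v v = y ⬝ᵥ X' *ᵥ y + s := by
  have hX's := (isHermitian_iff_isSymm.1 hX'.1).apply
  let R := updateRow 1 v y
  have hR (i : W) : R i = if i = v then y else Pi.single i 1 := by
    by_cases hi : i = v
    · simp [R, hi]
    · ext k
      simp [R, hi, one_apply, Pi.single_apply, eq_comm]
  have hentry (i j : W) : (R * X' * Rᵀ) i j = R i ⬝ᵥ X' *ᵥ R j := by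
    rw [mul_mul_apply, transpose_transpose]
  refine ⟨R * X' * Rᵀ + diagonal (Pi.single v s), ?_, fun i j hi hj => ?_, fun j hj => ?_, ?_⟩
  · refine (hX'.mul_mul_transpose_same R).add (posSemidef_diagonal_iff.2 fun i => ?_)
    by_cases hi : i = v
    · simp [hi, hs]
    · simp [hi]
  · rw [add_apply, hentry, hR, hR, if_neg hi, if_neg hj, single_one_dotProduct,
      mulVec_single_one, col_apply]
    simp [diagonal_apply, hi]
  · rw [add_apply, hentry, hR, hR, if_pos rfl, if_neg hj, mulVec_single_one,
      diagonal_apply_ne _ hj.symm, add_zero]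
    simp only [dotProduct, mulVec, col_apply, hX's j, mul_comm]
  · simp [hentry, hR]

theorem PosSemidef.exists_posSemidef_extension {V : Type*} [Fintype V] [DecidableEq V]
    {X' : Matrix V V ℝ} (hX' : X'.PosSemidef) {M : Matrix W W ℝ} (hM : M.PosSemidef)
    (e : W ↪ V) (w₀ : W) (hagree : ∀ u w, u ≠ w₀ → w ≠ w₀ → X' (e u) (e w) = M u w) :
    ∃ X : Matrix V V ℝ, X.PosSemidef ∧ (∀ i j, i ≠ e w₀ → j ≠ e w₀ → X i j = X' i j) ∧
      ∀ u, X (e w₀) (e u) = M w₀ u := by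
  have hMs := (isHermitian_iff_isSymm.1 hM.1).apply
  obtain ⟨z, hz0, hzM, hzz⟩ := hM.exists_mulVec_eq_of_ne w₀
  let y : V → ℝ := ∑ w, z w • Pi.single (e w) 1
  have hy (g : V → ℝ) : y ⬝ᵥ g = ∑ w, z w * g (e w) := by
    simp [y, sum_dotProduct]
  have hrow (w : W) (hw : w ≠ w₀) : (X' *ᵥ y) (e w) = (M *ᵥ z) w := by
    rw [mulVec, dotProduct_comm, hy, mulVec, dotProduct]
    refine Finset.sum_congr rfl fun w' _ => ?_
    by_cases hw' : w' = w₀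
    · simp [hw', hz0]
    · rw [hagree w w' hw hw', mul_comm]
  have hquad : y ⬝ᵥ X' *ᵥ y = z ⬝ᵥ M *ᵥ z := by
    rw [hy, dotProduct]
    refine Finset.sum_congr rfl fun w _ => ?_
    by_cases hw : w = w₀
    · simp [hw, hz0]
    · rw [hrow w hw]
  obtain ⟨X, hX, hXX', hXrow, hXvv⟩ := hX'.exists_posSemidef_border (e w₀) y (sub_nonneg.2 hzz)
  refine ⟨X, hX, hXX', fun u => ?_⟩
  by_cases hu : u = w₀
  · rw [hu, hXvv, hquad, add_sub_cancel]
  · rw [hXrow _ (e.injective.ne hu), hrow u hu, hzM u hu, hMs]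

end Matrix

open SimpleGraph

/-- A partial matrix with pattern `G` is modelled by a full matrix whose entries off `Ē` are
ignored. -/
def IsPartialPosSemidef {V : Type*} (G : SimpleGraph V) (f : Matrix V V ℝ) : Prop :=
  ∀ K : Finset V, G.IsClique (K : Set V) → (f.submatrix ((↑) : K → V) (↑)).PosSemidef

theorem IsPartialPosSemidef.exists_posSemidef_of_isClique_neighborSet_inter {V : Type*}
    [Fintype V] [DecidableEq V] {G : SimpleGraph V} {f : Matrix V V ℝ}
    (hf : IsPartialPosSemidef G f) {S : Finset V} {v : V} (hvS : v ∈ S)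
    (hv : G.IsClique (G.neighborSet v ∩ S)) {X' : Matrix V V ℝ} (hX' : X'.PosSemidef)
    (hX'f : ∀ i ∈ S.erase v, ∀ j ∈ S.erase v, (i = j ∨ G.Adj i j) → X' i j = f i j) :
    ∃ X : Matrix V V ℝ, X.PosSemidef ∧
      ∀ i ∈ S, ∀ j ∈ S, (i = j ∨ G.Adj i j) → X i j = f i j := by
  classical
  let K : Finset V := S.filter fun u => v = u ∨ G.Adj v u
  have hK : G.IsClique (K : Set V) := by
    refine (hv.insert fun u hu _ => hu.1).subset fun u hu => ?_
    obtain ⟨huS, rfl | hvu⟩ := Finset.mem_filter.1 hu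
    exacts [.inl rfl, .inr ⟨hvu, huS⟩]
  have hvK : v ∈ K := Finset.mem_filter.2 ⟨hvS, .inl rfl⟩
  have hagree (u w : K) (hu : u ≠ ⟨v, hvK⟩) (hw : w ≠ ⟨v, hvK⟩) : X' u w = f u w := by
    have hKS (u : K) (hu : u ≠ ⟨v, hvK⟩) : (u : V) ∈ S.erase v :=
      Finset.mem_erase.2 ⟨fun h => hu (Subtype.ext h), (Finset.mem_filter.1 u.2).1⟩
    exact hX'f u (hKS u hu) w (hKS w hw) (hK.eq_or_adj u.2 w.2)
  obtain ⟨X, hX, hXX', hXv⟩ := hX'.exists_posSemidef_extension (hf K hK)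
    (Function.Embedding.subtype (· ∈ K)) ⟨v, hvK⟩ hagree
  refine ⟨X, hX, fun i hi j hj hij => ?_⟩
  by_cases hiv : i = v
  · subst hiv
    exact hXv ⟨j, Finset.mem_filter.2 ⟨hj, hij⟩⟩
  by_cases hjv : j = v
  · subst hjv
    have hiK : i ∈ K := Finset.mem_filter.2 ⟨hi, hij.imp Eq.symm Adj.symm⟩
    calc X i j = X j i := (isHermitian_iff_isSymm.1 hX.1).apply j i
      _ = f j i := hXv ⟨i, hiK⟩
      _ = f i j := (isHermitian_iff_isSymm.1 (hf K hK).1).apply ⟨i, hiK⟩ ⟨j, hvK⟩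
  · rw [hXX' i j hiv hjv]
    exact hX'f i (Finset.mem_erase.2 ⟨hiv, hi⟩) j (Finset.mem_erase.2 ⟨hjv, hj⟩) hij

theorem SimpleGraph.Chordal.exists_posSemidef_completion {V : Type*} [Fintype V] [DecidableEq V]
    {G : SimpleGraph V} (hG : G.Chordal) {f : Matrix V V ℝ} (hf : IsPartialPosSemidef G f) :
    ∃ X : Matrix V V ℝ, X.PosSemidef ∧ ∀ i j, (i = j ∨ G.Adj i j) → X i j = f i j := by
  suffices ∀ S : Finset V, ∃ X : Matrix V V ℝ, X.PosSemidef ∧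
      ∀ i ∈ S, ∀ j ∈ S, (i = j ∨ G.Adj i j) → X i j = f i j by
    obtain ⟨X, hX, hXf⟩ := this Finset.univ
    exact ⟨X, hX, fun i j => hXf i (Finset.mem_univ _) j (Finset.mem_univ _)⟩
  intro S
  induction S using Finset.strongInduction with
  | H S ih =>
  rcases S.eq_empty_or_nonempty with rfl | hS
  · exact ⟨0, .zero, by simp⟩
  obtain ⟨v, hvS, hv⟩ := hG.exists_mem_isClique_neighborSet_inter (S := (S : Set V)) hS
  obtain ⟨X', hX', hX'f⟩ := ih (S.erase v) (Finset.erase_ssubset hvS)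
  exact hf.exists_posSemidef_of_isClique_neighborSet_inter hvS hv hX' hX'f

theorem IsChordal.chordal {n : ℕ} {G : SimpleGraph (Fin n)} (hG : IsChordal G) : G.Chordal :=
  fun v c hc hl hcl =>
    let ⟨_, _, hu, hw, hadj, hnot⟩ := hG v c hc hl
    hnot (hcl.mem_edges hu hw hadj)

theorem exists_subset_of_isClique {n N : ℕ} {G : SimpleGraph (Fin n)}
    {Cs : Fin N → Finset (Fin n)} (hall : ∀ s : Finset (Fin n), IsMaxClique G s → ∃ i, Cs i = s)
    {K : Finset (Fin n)} (hK : G.IsClique (K : Set (Fin n))) : ∃ i, K ⊆ Cs i := by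
  obtain ⟨t, hKt, ht⟩ := Finite.exists_le_maximal (p := fun t : Finset (Fin n) => G.IsClique ↑t) hK
  obtain ⟨i, rfl⟩ := hall t ⟨ht.prop, fun t' ht' htt' => le_antisymm htt' (ht.2 ht' htt')⟩
  exact ⟨i, hKt⟩

section Selection

variable {n : ℕ}

theorem selMat_apply (s : Finset (Fin n)) (h : Fin s.card) (k : Fin n) :
    selMat s h k = if s.orderEmbOfFin rfl h = k then 1 else 0 :=
  rfl

theorem selMat_mul_mul_transpose (s : Finset (Fin n)) (Q : Matrix (Fin n) (Fin n) ℝ) :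
    selMat s * Q * (selMat s)ᵀ = Q.submatrix (s.orderEmbOfFin rfl) (s.orderEmbOfFin rfl) := by
  ext h k
  simp [selMat_apply, mul_apply]

theorem transpose_selMat_mul_mul_selMat_apply (s : Finset (Fin n))
    (Y : Matrix (Fin s.card) (Fin s.card) ℝ) (h k : Fin s.card) :
    ((selMat s)ᵀ * Y * selMat s) (s.orderEmbOfFin rfl h) (s.orderEmbOfFin rfl k) = Y h k := by
  simp [selMat_apply, mul_apply]

theorem selMat_mul_mul_transpose_eq_zero_iff (s : Finset (Fin n))
    (Z : Matrix (Fin n) (Fin n) ℝ) :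
    selMat s * Z * (selMat s)ᵀ = 0 ↔ ∀ u ∈ s, ∀ w ∈ s, Z u w = 0 := by
  rw [selMat_mul_mul_transpose]
  constructor
  · intro h u hu w hw
    obtain ⟨a, rfl⟩ : u ∈ Set.range (s.orderEmbOfFin rfl) := by simpa using hu
    obtain ⟨b, rfl⟩ : w ∈ Set.range (s.orderEmbOfFin rfl) := by simpa using hw
    simpa using congrFun (congrFun h a) b
  · intro h
    ext a b
    exact h _ (s.orderEmbOfFin_mem rfl a) _ (s.orderEmbOfFin_mem rfl b)

theorem transpose_selMat_mul_restrict_mul_selMat_apply (s : Finset (Fin n))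
    (X : Matrix (Fin n) (Fin n) ℝ) {u w : Fin n} (hu : u ∈ s) (hw : w ∈ s) :
    ((selMat s)ᵀ * (selMat s * X * (selMat s)ᵀ) * selMat s) u w = X u w := by
  obtain ⟨a, rfl⟩ : u ∈ Set.range (s.orderEmbOfFin rfl) := by simpa using hu
  obtain ⟨b, rfl⟩ : w ∈ Set.range (s.orderEmbOfFin rfl) := by simpa using hw
  rw [transpose_selMat_mul_mul_selMat_apply, selMat_mul_mul_transpose, submatrix_apply]

end Selection

section Sparsity

variable {n : ℕ} (G : SimpleGraph (Fin n)) [DecidableRel G.Adj]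

def sparsify (M : Matrix (Fin n) (Fin n) ℝ) : Matrix (Fin n) (Fin n) ℝ :=
  of fun i j => if i = j ∨ G.Adj i j then M i j else 0

variable {G}

theorem sparsify_apply_of_eq_or_adj (M : Matrix (Fin n) (Fin n) ℝ) {i j : Fin n}
    (h : i = j ∨ G.Adj i j) : sparsify G M i j = M i j :=
  if_pos h

theorem hasSparsity_sparsify (M : Matrix (Fin n) (Fin n) ℝ) : HasSparsity G (sparsify G M) :=
  fun _ _ hij hadj => if_neg (not_or.2 ⟨hij, hadj⟩)

theorem Matrix.IsSymm.sparsify {M : Matrix (Fin n) (Fin n) ℝ} (hM : M.IsSymm) :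
    (sparsify G M).IsSymm := by
  ext i j
  simp [_root_.sparsify, eq_comm, G.adj_comm, hM.apply]

theorem HasSparsity.trace_mul_sparsify {A : Matrix (Fin n) (Fin n) ℝ} (hA : HasSparsity G A)
    (M : Matrix (Fin n) (Fin n) ℝ) : (A * sparsify G M).trace = (A * M).trace := by
  simp only [trace, diag, mul_apply]
  refine Finset.sum_congr rfl fun u _ => Finset.sum_congr rfl fun w _ => ?_
  by_cases h : w = u ∨ G.Adj w u
  · rw [sparsify_apply_of_eq_or_adj M h]
  · push Not at h
    rw [hA u w (Ne.symm h.1) (fun h' => h.2 h'.symm), zero_mul, zero_mul]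

end Sparsity

theorem trace_mul_eq_sum_of_decomposition {n N : ℕ} {G : SimpleGraph (Fin n)}
    {Cs : Fin N → Finset (Fin n)} (hcl : ∀ i, G.IsClique (Cs i : Set (Fin n)))
    {A : Matrix (Fin n) (Fin n) ℝ} (hA : HasSparsity G A)
    {Ai : (i : Fin N) → Matrix (Fin (Cs i).card) (Fin (Cs i).card) ℝ}
    (hdec : ∀ Q : Matrix (Fin n) (Fin n) ℝ, Q.IsSymm → HasSparsity G Q →
      (A * Q).trace = ∑ i, (Ai i * (selMat (Cs i) * Q * (selMat (Cs i))ᵀ)).trace)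
    {X : Matrix (Fin n) (Fin n) ℝ} (hX : X.IsSymm) :
    (A * X).trace = ∑ i, (Ai i * (selMat (Cs i) * X * (selMat (Cs i))ᵀ)).trace := by
  classical
  rw [← hA.trace_mul_sparsify, hdec _ hX.sparsify (hasSparsity_sparsify X)]
  refine Finset.sum_congr rfl fun i _ => ?_
  rw [selMat_mul_mul_transpose, selMat_mul_mul_transpose]
  congr 2
  ext h k
  exact sparsify_apply_of_eq_or_adj X
    ((hcl i).eq_or_adj ((Cs i).orderEmbOfFin_mem rfl h) ((Cs i).orderEmbOfFin_mem rfl k))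

theorem exists_posSemidef_of_consistent {n N : ℕ} {G : SimpleGraph (Fin n)} (hG : G.Chordal)
    {Cs : Fin N → Finset (Fin n)} (hcl : ∀ i, G.IsClique (Cs i : Set (Fin n)))
    (hsubset : ∀ K : Finset (Fin n), G.IsClique (K : Set (Fin n)) → ∃ i, K ⊆ Cs i)
    {Xi : (i : Fin N) → Matrix (Fin (Cs i).card) (Fin (Cs i).card) ℝ}
    (hXi : ∀ i, (Xi i).PosSemidef)
    (hcons : ∀ i j : Fin N, selMat (Cs i ∩ Cs j) *
      ((selMat (Cs i))ᵀ * Xi i * selMat (Cs i) - (selMat (Cs j))ᵀ * Xi j * selMat (Cs j)) *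
      (selMat (Cs i ∩ Cs j))ᵀ = 0) :
    ∃ X : Matrix (Fin n) (Fin n) ℝ, X.PosSemidef ∧
      ∀ i, selMat (Cs i) * X * (selMat (Cs i))ᵀ = Xi i := by
  classical
  let L i := (selMat (Cs i))ᵀ * Xi i * selMat (Cs i)
  have hL (i : Fin N) : (L i).PosSemidef := by
    simpa [L] using (hXi i).mul_mul_transpose_same (selMat (Cs i))ᵀ
  have hLL (i j : Fin N) (u w : Fin n) (hu : u ∈ Cs i ∩ Cs j) (hw : w ∈ Cs i ∩ Cs j) :
      L i u w = L j u w :=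
    sub_eq_zero.1 ((selMat_mul_mul_transpose_eq_zero_iff _ _).1 (hcons i j) u hu w hw)
  let f : Matrix (Fin n) (Fin n) ℝ := of fun u w =>
    if h : ∃ i, u ∈ Cs i ∧ w ∈ Cs i then L h.choose u w else 0
  have hf (i : Fin N) (u w : Fin n) (hu : u ∈ Cs i) (hw : w ∈ Cs i) : f u w = L i u w := by
    have h : ∃ i, u ∈ Cs i ∧ w ∈ Cs i := ⟨i, hu, hw⟩
    simp only [f, of_apply, dif_pos h]
    exact hLL _ _ u w (Finset.mem_inter.2 ⟨h.choose_spec.1, hu⟩)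
      (Finset.mem_inter.2 ⟨h.choose_spec.2, hw⟩)
  have hfpsd : IsPartialPosSemidef G f := by
    intro K hK
    obtain ⟨i, hKi⟩ := hsubset K hK
    convert (hL i).submatrix ((↑) : K → Fin n) using 1
    ext u w
    exact hf i u w (hKi u.2) (hKi w.2)
  obtain ⟨X, hX, hXf⟩ := hG.exists_posSemidef_completion hfpsd
  refine ⟨X, hX, fun i => ?_⟩
  ext h k
  have hh := (Cs i).orderEmbOfFin_mem rfl h
  have hk := (Cs i).orderEmbOfFin_mem rfl k
  rw [selMat_mul_mul_transpose, submatrix_apply, hXf _ _ ((hcl i).eq_or_adj hh hk),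
    hf i _ _ hh hk]
  exact transpose_selMat_mul_mul_selMat_apply _ _ h k

theorem clique_tree_conversion_preserves_sdp_general {n N m : ℕ}
    (G : SimpleGraph (Fin n)) (hG : IsChordal G)
    (Cs : Fin N → Finset (Fin n))
    (hcl : ∀ i, IsMaxClique G (Cs i))
    (hall : ∀ s : Finset (Fin n), IsMaxClique G s → ∃ i, Cs i = s)
    (C : Matrix (Fin n) (Fin n) ℝ) (hCsp : HasSparsity G C)
    (A : Fin m → Matrix (Fin n) (Fin n) ℝ)
    (hAsp : ∀ k, HasSparsity G (A k))
    (b : Fin m → ℝ)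
    (Ci : (i : Fin N) → Matrix (Fin (Cs i).card) (Fin (Cs i).card) ℝ)
    (Aki : (k : Fin m) → (i : Fin N) → Matrix (Fin (Cs i).card) (Fin (Cs i).card) ℝ)
    (hCdec : ∀ Q : Matrix (Fin n) (Fin n) ℝ, Q.IsSymm → HasSparsity G Q →
      (C * Q).trace = ∑ i, (Ci i * (selMat (Cs i) * Q * (selMat (Cs i))ᵀ)).trace)
    (hAdec : ∀ (k : Fin m) (Q : Matrix (Fin n) (Fin n) ℝ), Q.IsSymm → HasSparsity G Q →
      (A k * Q).trace = ∑ i, (Aki k i * (selMat (Cs i) * Q * (selMat (Cs i))ᵀ)).trace) :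
    {r : ℝ | ∃ X : Matrix (Fin n) (Fin n) ℝ, X.PosSemidef ∧
        (∀ k, (A k * X).trace = b k) ∧ r = (C * X).trace} =
    {r : ℝ | ∃ Xi : (i : Fin N) → Matrix (Fin (Cs i).card) (Fin (Cs i).card) ℝ,
        (∀ i, (Xi i).PosSemidef) ∧
        (∀ k, ∑ i, (Aki k i * Xi i).trace = b k) ∧
        (∀ i j : Fin N,
          selMat (Cs i ∩ Cs j) *
            ((selMat (Cs i))ᵀ * Xi i * selMat (Cs i) -
              (selMat (Cs j))ᵀ * Xi j * selMat (Cs j)) *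
            (selMat (Cs i ∩ Cs j))ᵀ = 0) ∧
        r = ∑ i, (Ci i * Xi i).trace} := by
  have hclq (i : Fin N) : G.IsClique (Cs i : Set (Fin n)) := (hcl i).1
  have hobj {X : Matrix (Fin n) (Fin n) ℝ} (hX : X.PosSemidef) :=
    trace_mul_eq_sum_of_decomposition hclq hCsp hCdec (isHermitian_iff_isSymm.1 hX.1)
  have hcon {X : Matrix (Fin n) (Fin n) ℝ} (hX : X.PosSemidef) (k : Fin m) :=
    trace_mul_eq_sum_of_decomposition hclq (hAsp k) (hAdec k) (isHermitian_iff_isSymm.1 hX.1)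
  ext r
  constructor
  · rintro ⟨X, hX, hXA, rfl⟩
    refine ⟨fun i => selMat (Cs i) * X * (selMat (Cs i))ᵀ, fun i => ?_,
      fun k => (hcon hX k).symm.trans (hXA k), fun i j => ?_, hobj hX⟩
    · exact hX.mul_mul_transpose_same (selMat (Cs i))
    · refine (selMat_mul_mul_transpose_eq_zero_iff _ _).2 fun u hu w hw => ?_
      rw [Finset.mem_inter] at hu hw
      rw [Matrix.sub_apply, transpose_selMat_mul_restrict_mul_selMat_apply _ _ hu.1 hw.1,
        transpose_selMat_mul_restrict_mul_selMat_apply _ _ hu.2 hw.2, sub_self]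
  · rintro ⟨Xi, hXi, hXiA, hcons, rfl⟩
    obtain ⟨X, hX, hXi_eq⟩ := exists_posSemidef_of_consistent hG.chordal hclq
      (fun K hK => exists_subset_of_isClique hall hK) hXi hcons
    refine ⟨X, hX, fun k => ?_, ?_⟩
    · rw [hcon hX k, ← hXiA k]
      simp only [hXi_eq]
    · rw [hobj hX]
      simp only [hXi_eq]

/-- (Clique-tree conversion preserves the SDP.) For a chordal graph `G` whose
cliques are `C_1, …, C_N`, and data matrices with sparsity pattern `G` that are
decomposed over the cliques, the objective values achieved by the original SDP
and by its clique-tree decomposition coincide; in particular the two problems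
have the same optimal value. -/
theorem clique_tree_conversion_preserves_sdp {n N m : ℕ}
    (G : SimpleGraph (Fin n)) (hG : IsChordal G)
    (Cs : Fin N → Finset (Fin n))
    (hcl : ∀ i, IsMaxClique G (Cs i))
    (hall : ∀ s : Finset (Fin n), IsMaxClique G s → ∃ i, Cs i = s)
    (hcover : ∀ h k : Fin n, (h = k ∨ G.Adj h k) → ∃ i, h ∈ Cs i ∧ k ∈ Cs i)
    (C : Matrix (Fin n) (Fin n) ℝ) (hCsymm : C.IsSymm) (hCsp : HasSparsity G C)
    (A : Fin m → Matrix (Fin n) (Fin n) ℝ)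
    (hAsymm : ∀ k, (A k).IsSymm) (hAsp : ∀ k, HasSparsity G (A k))
    (b : Fin m → ℝ)
    (Ci : (i : Fin N) → Matrix (Fin (Cs i).card) (Fin (Cs i).card) ℝ)
    (hCisymm : ∀ i, (Ci i).IsSymm)
    (Aki : (k : Fin m) → (i : Fin N) → Matrix (Fin (Cs i).card) (Fin (Cs i).card) ℝ)
    (hAkisymm : ∀ k i, (Aki k i).IsSymm)
    (hCdec : ∀ Q : Matrix (Fin n) (Fin n) ℝ, Q.IsSymm → HasSparsity G Q →
      (C * Q).trace = ∑ i, (Ci i * (selMat (Cs i) * Q * (selMat (Cs i))ᵀ)).trace)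
    (hAdec : ∀ (k : Fin m) (Q : Matrix (Fin n) (Fin n) ℝ), Q.IsSymm → HasSparsity G Q →
      (A k * Q).trace = ∑ i, (Aki k i * (selMat (Cs i) * Q * (selMat (Cs i))ᵀ)).trace) :
    {r : ℝ | ∃ X : Matrix (Fin n) (Fin n) ℝ, X.PosSemidef ∧
        (∀ k, (A k * X).trace = b k) ∧ r = (C * X).trace} =
    {r : ℝ | ∃ Xi : (i : Fin N) → Matrix (Fin (Cs i).card) (Fin (Cs i).card) ℝ,
        (∀ i, (Xi i).PosSemidef) ∧
        (∀ k, ∑ i, (Aki k i * Xi i).trace = b k) ∧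
        (∀ i j : Fin N,
          selMat (Cs i ∩ Cs j) *
            ((selMat (Cs i))ᵀ * Xi i * selMat (Cs i) -
              (selMat (Cs j))ᵀ * Xi j * selMat (Cs j)) *
            (selMat (Cs i ∩ Cs j))ᵀ = 0) ∧
        r = ∑ i, (Ci i * Xi i).trace} :=
  clique_tree_conversion_preserves_sdp_general G hG Cs hcl hall C hCsp A hAsp b Ci Aki hCdec hAdec
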